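/- arXiv:math/0509199 — 2 statements merged into one kernel-verified Lean document; each statement's English description precedes it below -/
import Mathlib

section
/- Let n ≥ 1, b > 0, α > 1, and set c_α = 10α√n/(α−1). Then for every r ≥ c_α one has ∫₁^{r/2} e^{−2bR^α + bR^{α−1} r/√n} dR ≥ (2/5)·((α−1)/α)·(r/√n) · e^{b(α−1)^{α−1} r^α/(10^{α−1} α^α n^{α/2})}. -/
open MeasureTheory Real Set Filter
open scoped Topology BigOperators

/-- For `n ≥ 1`, `b > 0`, `α > 1` and `r ≥ c_α = 10α√n/(α-1)`:
`∫₁^{r/2} e^{-2bR^α + bR^{α-1}r/√n} dR ≥ (2/5)((α-1)/α)(r/√n) e^{b(α-1)^{α-1} r^α/(10^{α-1} α^α n^{α/2})}`. -/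
theorem exp_integral_lower_bound (n : ℕ) (hn : 0 < n) (b α r : ℝ)
    (hb : 0 < b) (hα : 1 < α) (hr : 10 * α * Real.sqrt n / (α - 1) ≤ r) :
    2/5 * ((α - 1)/α) * (r / Real.sqrt n) *
        Real.exp (b * (α - 1) ^ (α - 1) * r ^ α /
          (10 ^ (α - 1) * α ^ α * (n : ℝ) ^ (α/2))) ≤
      ∫ R in (1:ℝ)..(r/2), Real.exp (-2 * b * R ^ α + b * R ^ (α - 1) * r / Real.sqrt n) := by
  have hα0 : (0:ℝ) < α := lt_trans one_pos hα
  have hα1 : (0:ℝ) < α - 1 := sub_pos.mpr hα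
  set s := Real.sqrt n with hs_def
  have hs1 : (1:ℝ) ≤ s := by
    rw [hs_def, show (1:ℝ) = Real.sqrt 1 by simp]
    exact Real.sqrt_le_sqrt (by exact_mod_cast hn)
  have hs0 : (0:ℝ) < s := lt_of_lt_of_le one_pos hs1
  have hr0 : (0:ℝ) < r := lt_of_lt_of_le (by positivity) hr
  set R₀ := (α - 1) * r / (10 * α * s) with hR₀
  set R₁ := (α - 1) * r / (2 * α * s) with hR₁
  have hr' : 10 * α * s ≤ r * (α - 1) := by
    rw [div_le_iff₀ hα1] at hr; exact hr
  have hR₀1 : (1:ℝ) ≤ R₀ := by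
    rw [hR₀, le_div_iff₀ (by positivity)]
    nlinarith
  have hR₀R₁ : R₀ ≤ R₁ := by
    rw [hR₀, hR₁]
    apply div_le_div_of_nonneg_left (by nlinarith) (by positivity)
    nlinarith
  have hR₁half : R₁ ≤ r / 2 := by
    rw [hR₁, div_le_div_iff₀ (by positivity) two_pos]
    have h' : r * α * 1 ≤ r * α * s := mul_le_mul_of_nonneg_left hs1 (by positivity)
    nlinarith
  have h1half : (1:ℝ) ≤ r / 2 := hR₀1.trans (hR₀R₁.trans hR₁half)
  set f : ℝ → ℝ := fun R => Real.exp (-2 * b * R ^ α + b * R ^ (α - 1) * r / s) with hf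
  -- continuity / integrability
  have hcont : ContinuousOn f (Set.Ici 1) := by
    apply Real.continuous_exp.comp_continuousOn
    have hx : ContinuousOn (fun x : ℝ => x ^ α) (Set.Ici 1) :=
      continuousOn_id.rpow_const fun x hx => Or.inl (ne_of_gt (lt_of_lt_of_le one_pos hx))
    have hx' : ContinuousOn (fun x : ℝ => x ^ (α - 1)) (Set.Ici 1) :=
      continuousOn_id.rpow_const fun x hx => Or.inl (ne_of_gt (lt_of_lt_of_le one_pos hx))
    exact (continuousOn_const.mul hx).add
      (((continuousOn_const.mul hx').mul continuousOn_const).div_const s)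
  have hint1 : IntervalIntegrable f volume 1 (r/2) := by
    apply ContinuousOn.intervalIntegrable
    apply hcont.mono
    rw [Set.uIcc_of_le h1half]
    exact Set.Icc_subset_Ici_self
  have hint2 : IntervalIntegrable f volume R₀ R₁ := by
    apply ContinuousOn.intervalIntegrable
    apply hcont.mono
    rw [Set.uIcc_of_le hR₀R₁]
    exact fun x hx => le_trans hR₀1 hx.1
  set E := b * (α - 1) ^ (α - 1) * r ^ α / (10 ^ (α - 1) * α ^ α * (n : ℝ) ^ (α/2)) with hE
  -- key algebraic identity
  set q := r / s with hq
  have hq0 : (0:ℝ) < q := div_pos hr0 hs0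
  have hNalg : b * R₀ ^ (α - 1) * (r / (α * s)) = E := by
    have hR₀q : R₀ = ((α - 1) / (10 * α)) * q := by
      rw [hR₀, hq]; first | (field_simp; ring) | field_simp
    have h1 : R₀ ^ (α - 1) = ((α - 1) / (10 * α)) ^ (α - 1) * q ^ (α - 1) := by
      rw [hR₀q, Real.mul_rpow (by positivity) (by positivity)]
    have h2 : q ^ (α - 1) * q = q ^ α := by
      have := Real.rpow_add_one hq0.ne' (α - 1)
      rw [show α - 1 + 1 = α by ring] at this
      exact this.symm
    have h3 : ((α - 1) / (10 * α)) ^ (α - 1)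
        = (α - 1) ^ (α - 1) / (10 ^ (α - 1) * α ^ (α - 1)) := by
      rw [Real.div_rpow hα1.le (by positivity), Real.mul_rpow (by norm_num) hα0.le]
    have hsα : s ^ α = (n : ℝ) ^ (α / 2) := by
      rw [hs_def, Real.sqrt_eq_rpow, ← Real.rpow_mul (by positivity)]
      ring_nf
    have h4 : q ^ α = r ^ α / (n : ℝ) ^ (α / 2) := by
      rw [hq, Real.div_rpow hr0.le hs0.le, hsα]
      try tauto
    have h5 : α ^ (α - 1) * α = α ^ α := by
      have := Real.rpow_add_one hα0.ne' (α - 1)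
      rw [show α - 1 + 1 = α by ring] at this
      exact this.symm
    have hrs : r / (α * s) = q / α := by rw [hq, div_div]; ring
    rw [hE, h1, h3, hrs]
    have e1 : b * ((α - 1) ^ (α - 1) / (10 ^ (α - 1) * α ^ (α - 1)) * q ^ (α - 1)) * (q / α)
        = b * (α - 1) ^ (α - 1) * (q ^ (α - 1) * q) / (10 ^ (α - 1) * (α ^ (α - 1) * α)) := by
      ring
    rw [e1, h2, h5, h4]
    ring
  -- pointwise bound on [R₀, R₁]
  have key : ∀ R ∈ Set.Icc R₀ R₁, Real.exp E ≤ f R := by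
    intro R hR
    have hR1 : (1:ℝ) ≤ R := le_trans hR₀1 hR.1
    have hRpos : (0:ℝ) < R := lt_of_lt_of_le one_pos hR1
    apply Real.exp_le_exp.mpr
    have hpow : R ^ α = R ^ (α - 1) * R := by
      have := Real.rpow_add_one hRpos.ne' (α - 1)
      rw [show α - 1 + 1 = α by ring] at this
      exact this
    have hrw : -2 * b * R ^ α + b * R ^ (α - 1) * r / s
        = b * R ^ (α - 1) * (r / s - 2 * R) := by
      rw [hpow]; ring
    rw [hrw, ← hNalg]
    have h1 : R₀ ^ (α - 1) ≤ R ^ (α - 1) :=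
      Real.rpow_le_rpow (by positivity) hR.1 hα1.le
    have h2 : r / (α * s) ≤ r / s - 2 * R := by
      have hR2 : R ≤ R₁ := hR.2
      have heq : r / s - 2 * R₁ = r / (α * s) := by
        rw [hR₁]; first | (field_simp; ring) | field_simp
      linarith
    have hp0 : (0:ℝ) ≤ R₀ ^ (α - 1) := by positivity
    have hp1 : (0:ℝ) < r / (α * s) := by positivity
    calc b * R₀ ^ (α - 1) * (r / (α * s)) ≤ b * R ^ (α - 1) * (r / (α * s)) := by
          apply mul_le_mul_of_nonneg_right _ hp1.le
          exact mul_le_mul_of_nonneg_left h1 hb.le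
      _ ≤ b * R ^ (α - 1) * (r / s - 2 * R) := by
          apply mul_le_mul_of_nonneg_left h2
          positivity
  -- assembling
  have hwidth : 2/5 * ((α - 1)/α) * (r / s) = R₁ - R₀ := by
    rw [hR₀, hR₁]; first | (field_simp; ring) | field_simp
  calc 2/5 * ((α - 1)/α) * (r / s) * Real.exp E = (R₁ - R₀) * Real.exp E := by
        rw [hwidth]
    _ = ∫ _ in R₀..R₁, Real.exp E := by
        rw [intervalIntegral.integral_const, smul_eq_mul]
    _ ≤ ∫ R in R₀..R₁, f R :=
        intervalIntegral.integral_mono_on hR₀R₁ intervalIntegrable_const hint2 key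
    _ ≤ ∫ R in (1:ℝ)..(r/2), f R :=
        intervalIntegral.integral_mono_interval hR₀1 hR₀R₁ hR₁half
          (ae_of_all _ fun x => (Real.exp_pos _).le) hint1
end

section
/- Let R > 0, α > 0, let φ : ℝ → ℝ be smooth, and let g : ℝⁿ × ℝ → ℂ be smooth. Set f(x,t) = e^{α|x/R + φ(t)e₁|²} g(x,t). Then with the operators S_α = i∂ₜ + Δ + (4α²/R²)|x/R + φ(t)e₁|² and A_α = (1/R)(x/R + φ(t)e₁)·∇ₓ + n/(2R²) + (iφ'(t)/2)(x₁/R + φ(t)), one has the pointwise identity e^{α|x/R+φ(t)e₁|²} (i∂ₜ + Δ)g = S_α f − 4α A_α f on ℝⁿ × ℝ. -/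
open MeasureTheory Real Set Filter
open scoped Topology BigOperators

/-- The partial derivative `∂_{x_j} f` of a function on `ℝⁿ`. -/
noncomputable def pdj (n : ℕ) (f : EuclideanSpace ℝ (Fin n) → ℂ) (j : Fin n)
    (x : EuclideanSpace ℝ (Fin n)) : ℂ :=
  fderiv ℝ f x (EuclideanSpace.single j 1)

/-- The Laplacian `Δf = ∑_j ∂²_{x_j} f`. -/
noncomputable def lap (n : ℕ) (f : EuclideanSpace ℝ (Fin n) → ℂ)
    (x : EuclideanSpace ℝ (Fin n)) : ℂ :=
  ∑ j : Fin n, pdj n (pdj n f j) j x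

/-- The unit vector `e₁ ∈ ℝⁿ`. -/
noncomputable def e1 (n : ℕ) [NeZero n] : EuclideanSpace ℝ (Fin n) :=
  EuclideanSpace.single (0 : Fin n) (1 : ℝ)

/-- The Carleman weight `e^{α |x/R + φ(t) e₁|²}`. -/
noncomputable def cwt (n : ℕ) [NeZero n] (R α : ℝ) (φ : ℝ → ℝ)
    (x : EuclideanSpace ℝ (Fin n)) (t : ℝ) : ℝ :=
  Real.exp (α * ‖R⁻¹ • x + φ t • e1 n‖ ^ 2)

/-- The symmetric operator `S_α = i∂ₜ + Δ + (4α²/R²)|x/R + φ(t)e₁|²`. -/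
noncomputable def Sop (n : ℕ) [NeZero n] (R α : ℝ) (φ : ℝ → ℝ)
    (f : EuclideanSpace ℝ (Fin n) → ℝ → ℂ)
    (x : EuclideanSpace ℝ (Fin n)) (t : ℝ) : ℂ :=
  Complex.I * deriv (fun s => f x s) t + lap n (fun y => f y t) x
    + ((4 * α ^ 2 / R ^ 2 * ‖R⁻¹ • x + φ t • e1 n‖ ^ 2 : ℝ) : ℂ) * f x t

/-- The antisymmetric operator
`A_α = (1/R)(x/R + φ(t)e₁)·∇ + n/(2R²) + (iφ'(t)/2)(x₁/R + φ(t))`. -/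
noncomputable def Aop (n : ℕ) [NeZero n] (R : ℝ) (φ : ℝ → ℝ)
    (f : EuclideanSpace ℝ (Fin n) → ℝ → ℂ)
    (x : EuclideanSpace ℝ (Fin n)) (t : ℝ) : ℂ :=
  ((R⁻¹ : ℝ) : ℂ) *
      ∑ j : Fin n, (((R⁻¹ • x + φ t • e1 n) j : ℝ) : ℂ) * pdj n (fun y => f y t) j x
    + (((n : ℝ) / (2 * R ^ 2) : ℝ) : ℂ) * f x t
    + Complex.I * ((deriv φ t : ℝ) : ℂ) / 2 * ((x 0 / R + φ t : ℝ) : ℂ) * f x t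


section Aux
set_option linter.unusedSectionVars false
set_option maxHeartbeats 1000000
variable {n : ℕ} [NeZero n]

noncomputable def WD (α R : ℝ) (x c : EuclideanSpace ℝ (Fin n)) :
    EuclideanSpace ℝ (Fin n) →L[ℝ] ℝ :=
  α • ∑ i : Fin n, (2 * ((R⁻¹ • x + c) i) * R⁻¹) • (EuclideanSpace.proj (𝕜 := ℝ) i)

lemma norm_sq_sum (v : EuclideanSpace ℝ (Fin n)) : ‖v‖ ^ 2 = ∑ i, v i ^ 2 := by
  rw [EuclideanSpace.norm_eq, Real.sq_sqrt (by positivity)]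
  simp [sq_abs]

lemma hasFDerivAt_W (α R : ℝ) (c x : EuclideanSpace ℝ (Fin n)) :
    HasFDerivAt (fun y : EuclideanSpace ℝ (Fin n) => α * ‖R⁻¹ • y + c‖ ^ 2) (WD α R x c) x := by
  have heq : (fun y : EuclideanSpace ℝ (Fin n) => α * ‖R⁻¹ • y + c‖ ^ 2)
      = fun y => α * ∑ i, ((R⁻¹ * (EuclideanSpace.proj (𝕜 := ℝ) i) y + c i)
          * (R⁻¹ * (EuclideanSpace.proj (𝕜 := ℝ) i) y + c i)) := by
    funext y; rw [norm_sq_sum]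
    refine congrArg _ (Finset.sum_congr rfl fun i _ => ?_); rw [← sq]; rfl
  rw [heq]
  have h : ∀ i : Fin n, HasFDerivAt
      (fun y : EuclideanSpace ℝ (Fin n) => (R⁻¹ * (EuclideanSpace.proj (𝕜 := ℝ) i) y + c i)
          * (R⁻¹ * (EuclideanSpace.proj (𝕜 := ℝ) i) y + c i))
      ((2 * ((R⁻¹ • x + c) i) * R⁻¹) • (EuclideanSpace.proj (𝕜 := ℝ) i)) x := by
    intro i
    have h1 : HasFDerivAt (fun y : EuclideanSpace ℝ (Fin n) => R⁻¹ * (EuclideanSpace.proj (𝕜 := ℝ) i) y + c i)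
        (R⁻¹ • (EuclideanSpace.proj (𝕜 := ℝ) i)) x :=
      (((EuclideanSpace.proj (𝕜 := ℝ) i).hasFDerivAt (x := x)).const_mul R⁻¹).add_const (c i)
    have h2 := h1.mul h1
    refine h2.congr_fderiv ?_
    ext v
    simp [PiLp.add_apply, PiLp.smul_apply]
    ring
  have hs := HasFDerivAt.const_mul (HasFDerivAt.fun_sum (fun i (_ : i ∈ Finset.univ) => h i)) α
  exact hs

lemma WD_apply (α R : ℝ) (x c : EuclideanSpace ℝ (Fin n)) (j : Fin n) :
    WD α R x c (EuclideanSpace.single j 1) = 2 * α * R⁻¹ * ((R⁻¹ • x + c) j) := by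
  simp [WD, ContinuousLinearMap.sum_apply, EuclideanSpace.single_apply]
  ring

noncomputable def cw (α R : ℝ) (c y : EuclideanSpace ℝ (Fin n)) : ℂ :=
  ((Real.exp (α * ‖R⁻¹ • y + c‖ ^ 2) : ℝ) : ℂ)

noncomputable def cwD (α R : ℝ) (c x : EuclideanSpace ℝ (Fin n)) :
    EuclideanSpace ℝ (Fin n) →L[ℝ] ℂ :=
  Complex.ofRealCLM.comp ((Real.exp (α * ‖R⁻¹ • x + c‖ ^ 2)) • WD α R x c)

lemma hasFDerivAt_cw (α R : ℝ) (c x : EuclideanSpace ℝ (Fin n)) :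
    HasFDerivAt (cw α R c) (cwD α R c x) x :=
  Complex.ofRealCLM.hasFDerivAt.comp x ((hasFDerivAt_W α R c x).exp)

lemma cwD_apply (α R : ℝ) (c x : EuclideanSpace ℝ (Fin n)) (j : Fin n) :
    cwD α R c x (EuclideanSpace.single j 1)
      = cw α R c x * ((2 * α * R⁻¹ * ((R⁻¹ • x + c) j) : ℝ) : ℂ) := by
  simp [cwD, cw, WD_apply, mul_comm]

lemma contDiff_pdjn {f : EuclideanSpace ℝ (Fin n) → ℂ} (hf : ContDiff ℝ (⊤ : ℕ∞) f) (j : Fin n) :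
    ContDiff ℝ (⊤ : ℕ∞) (pdj n f j) :=
  (hf.fderiv_right (by simp)).clm_apply contDiff_const

lemma hasFDerivAt_cwG {G : EuclideanSpace ℝ (Fin n) → ℂ} (hG : ContDiff ℝ (⊤ : ℕ∞) G)
    (α R : ℝ) (c x : EuclideanSpace ℝ (Fin n)) :
    HasFDerivAt (fun y => cw α R c y * G y)
      (cw α R c x • fderiv ℝ G x + G x • cwD α R c x) x :=
  (hasFDerivAt_cw α R c x).mul ((hG.differentiable (by simp) x).hasFDerivAt)

lemma pdjn_cwG {G : EuclideanSpace ℝ (Fin n) → ℂ} (hG : ContDiff ℝ (⊤ : ℕ∞) G)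
    (α R : ℝ) (c x : EuclideanSpace ℝ (Fin n)) (j : Fin n) :
    pdj n (fun y => cw α R c y * G y) j x
      = cw α R c x * (((2 * α * R⁻¹ * ((R⁻¹ • x + c) j) : ℝ) : ℂ) * G x + pdj n G j x) := by
  rw [pdj, (hasFDerivAt_cwG hG α R c x).fderiv]
  simp [cwD_apply, pdj]
  ring

lemma hasFDerivAt_M (α R : ℝ) (c x : EuclideanSpace ℝ (Fin n)) (j : Fin n) :
    HasFDerivAt (fun y : EuclideanSpace ℝ (Fin n) =>
        ((2 * α * R⁻¹ * ((R⁻¹ • y + c) j) : ℝ) : ℂ))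
      (Complex.ofRealCLM.comp ((2 * α * R⁻¹ * R⁻¹) • (EuclideanSpace.proj (𝕜 := ℝ) j))) x := by
  have h1 : HasFDerivAt (fun y : EuclideanSpace ℝ (Fin n) =>
      2 * α * R⁻¹ * ((R⁻¹ • y + c) j)) ((2 * α * R⁻¹ * R⁻¹) • (EuclideanSpace.proj (𝕜 := ℝ) j)) x := by
    have h0 : HasFDerivAt (fun y : EuclideanSpace ℝ (Fin n) =>
        2 * α * R⁻¹ * (R⁻¹ * (EuclideanSpace.proj (𝕜 := ℝ) j) y + c j))
        ((2 * α * R⁻¹) • (R⁻¹ • (EuclideanSpace.proj (𝕜 := ℝ) j))) x :=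
      ((((EuclideanSpace.proj (𝕜 := ℝ) j).hasFDerivAt (x := x)).const_mul R⁻¹).add_const
        (c j)).const_mul (2 * α * R⁻¹)
    refine h0.congr_fderiv ?_
    rw [smul_smul]
  exact Complex.ofRealCLM.hasFDerivAt.comp x h1

lemma pdjn_pdjn_cwG {G : EuclideanSpace ℝ (Fin n) → ℂ} (hG : ContDiff ℝ (⊤ : ℕ∞) G)
    (α R : ℝ) (c x : EuclideanSpace ℝ (Fin n)) (j : Fin n) :
    pdj n (pdj n (fun y => cw α R c y * G y) j) j x
      = cw α R c x *
        (((2 * α * R⁻¹ * ((R⁻¹ • x + c) j) : ℝ) : ℂ) ^ 2 * G x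
          + ((2 * α * R⁻¹ * R⁻¹ : ℝ) : ℂ) * G x
          + 2 * ((2 * α * R⁻¹ * ((R⁻¹ • x + c) j) : ℝ) : ℂ) * pdj n G j x
          + pdj n (pdj n G j) j x) := by
  have heq : (pdj n (fun y => cw α R c y * G y) j)
      = fun y => cw α R c y * (((2 * α * R⁻¹ * ((R⁻¹ • y + c) j) : ℝ) : ℂ) * G y + pdj n G j y) :=
    funext fun y => pdjn_cwG hG α R c y j
  rw [heq]
  have hGd := (hG.differentiable (by simp) x).hasFDerivAt
  have hGjd := ((contDiff_pdjn hG j).differentiable (by simp) x).hasFDerivAt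
  have hIn := ((hasFDerivAt_M α R c x j).fun_mul hGd).fun_add hGjd
  have h := (hasFDerivAt_cw α R c x).fun_mul hIn
  rw [pdj, h.fderiv]
  simp only [ContinuousLinearMap.add_apply, ContinuousLinearMap.smul_apply,
    ContinuousLinearMap.comp_apply, cwD_apply, smul_eq_mul]
  have hproj : (EuclideanSpace.proj (𝕜 := ℝ) j) (EuclideanSpace.single j (1:ℝ)) = 1 := by
    simp
  rw [hproj]
  simp only [Complex.ofRealCLM_apply, mul_one]
  have : fderiv ℝ G x (EuclideanSpace.single j 1) = pdj n G j x := rfl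
  rw [this]
  have : fderiv ℝ (pdj n G j) x (EuclideanSpace.single j 1) = pdj n (pdj n G j) j x := rfl
  rw [this]
  push_cast
  ring

lemma lapn_cwG {G : EuclideanSpace ℝ (Fin n) → ℂ} (hG : ContDiff ℝ (⊤ : ℕ∞) G)
    (α R : ℝ) (c x : EuclideanSpace ℝ (Fin n)) :
    lap n (fun y => cw α R c y * G y) x
      = ((4 * α ^ 2 * R⁻¹ ^ 2 * ∑ i, ((R⁻¹ • x + c) i) ^ 2 : ℝ) : ℂ) * (cw α R c x * G x)
        + ((2 * α * R⁻¹ ^ 2 * (n : ℝ) : ℝ) : ℂ) * (cw α R c x * G x)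
        + (4 * (α : ℂ) * ((R : ℝ) : ℂ)⁻¹) *
            (cw α R c x * ∑ j, (((R⁻¹ • x + c) j : ℝ) : ℂ) * pdj n G j x)
        + cw α R c x * lap n G x := by
  rw [lap]
  simp_rw [pdjn_pdjn_cwG hG α R c x]
  push_cast
  simp only [lap, mul_add, Finset.mul_sum, Finset.sum_add_distrib, Finset.sum_mul]
  congr 2
  congr 1
  · exact Finset.sum_congr rfl fun j _ => by ring
  · rw [Finset.sum_const, Finset.card_univ, Fintype.card_fin, nsmul_eq_mul]
    ring
  · exact Finset.sum_congr rfl fun j _ => by ring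

lemma wt_eq (α R : ℝ) (x : EuclideanSpace ℝ (Fin n)) (a : ℝ) :
    α * ‖R⁻¹ • x + a • EuclideanSpace.single (0 : Fin n) (1:ℝ)‖ ^ 2
      = α * (‖R⁻¹ • x‖ ^ 2 + 2 * (R⁻¹ * x 0) * a + a ^ 2) := by
  rw [norm_add_sq_real]
  have h1 : (inner ℝ (R⁻¹ • x) (a • EuclideanSpace.single (0 : Fin n) (1:ℝ)) : ℝ) = a * (R⁻¹ * x 0) := by
    rw [real_inner_smul_right]
    have := EuclideanSpace.inner_single_right (𝕜 := ℝ) (0 : Fin n) (1:ℝ) (R⁻¹ • x)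
    simp only [conj_trivial, one_mul] at this
    rw [this]
    rfl
  have h2 : ‖a • EuclideanSpace.single (0 : Fin n) (1:ℝ)‖ ^ 2 = a ^ 2 := by
    rw [norm_smul]
    simp [abs_sq, Real.norm_eq_abs, sq_abs]
  rw [h1, h2]
  ring

lemma hasDerivAt_cwg (α R : ℝ) (φ : ℝ → ℝ) (hφ : ContDiff ℝ (⊤ : ℕ∞) φ)
    (g : EuclideanSpace ℝ (Fin n) → ℝ → ℂ)
    (hg : ContDiff ℝ (⊤ : ℕ∞) (fun p : EuclideanSpace ℝ (Fin n) × ℝ => g p.1 p.2))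
    (x : EuclideanSpace ℝ (Fin n)) (t : ℝ) :
    HasDerivAt (fun s => ((Real.exp (α * ‖R⁻¹ • x + φ s • EuclideanSpace.single (0 : Fin n) (1:ℝ)‖ ^ 2) : ℝ) : ℂ) * g x s)
      (((Real.exp (α * ‖R⁻¹ • x + φ t • EuclideanSpace.single (0 : Fin n) (1:ℝ)‖ ^ 2) : ℝ) : ℂ) *
        (((2 * α * deriv φ t * (R⁻¹ * x 0 + φ t) : ℝ) : ℂ) * g x t + deriv (fun s => g x s) t)) t := by
  have hφd : HasDerivAt φ (deriv φ t) t := (hφ.differentiable (by simp) t).hasDerivAt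
  have hw : HasDerivAt (fun s => α * ‖R⁻¹ • x + φ s • EuclideanSpace.single (0 : Fin n) (1:ℝ)‖ ^ 2)
      (α * (2 * (R⁻¹ * x 0) * deriv φ t + 2 * φ t * deriv φ t)) t := by
    have : (fun s => α * ‖R⁻¹ • x + φ s • EuclideanSpace.single (0 : Fin n) (1:ℝ)‖ ^ 2)
        = fun s => α * (‖R⁻¹ • x‖ ^ 2 + 2 * (R⁻¹ * x 0) * φ s + (φ s) ^ 2) := by
      funext s; exact wt_eq α R x (φ s)
    rw [this]
    have h := (((hφd.const_mul (2 * (R⁻¹ * x 0))).add (hφd.pow 2)).const_add (‖R⁻¹ • x‖ ^ 2)).const_mul α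
    refine (h.congr_deriv ?_).congr_of_eventuallyEq (Filter.Eventually.of_forall fun s => ?_)
    · push_cast; ring
    · simp only [Pi.add_apply, Pi.pow_apply]; ring
  have hgx : HasDerivAt (fun s => g x s) (deriv (fun s => g x s) t) t := by
    have : ContDiff ℝ (⊤ : ℕ∞) (fun s => g x s) := hg.comp (contDiff_const.prodMk contDiff_id)
    exact (this.differentiable (by simp) t).hasDerivAt
  have hcw := (hw.exp).ofReal_comp.fun_mul hgx
  refine hcw.congr_deriv ?_
  push_cast
  ring

end Aux

/-- **Conjugation identity.** With `f = e^{α|x/R+φ(t)e₁|²} g`, one has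
`e^{α|x/R+φ(t)e₁|²} (i∂ₜ + Δ)g = S_α f - 4α A_α f` pointwise. -/
theorem conjugated_operator_identity (n : ℕ) [NeZero n] (R α : ℝ) (hR : 0 < R) (hα : 0 < α)
    (φ : ℝ → ℝ) (hφ : ContDiff ℝ (⊤ : ℕ∞) φ)
    (g : EuclideanSpace ℝ (Fin n) → ℝ → ℂ)
    (hg : ContDiff ℝ (⊤ : ℕ∞) (fun p : EuclideanSpace ℝ (Fin n) × ℝ => g p.1 p.2)) :
    ∀ (x : EuclideanSpace ℝ (Fin n)) (t : ℝ),
      ((cwt n R α φ x t : ℝ) : ℂ) *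
          (Complex.I * deriv (fun s => g x s) t + lap n (fun y => g y t) x) =
        Sop n R α φ (fun y s => ((cwt n R α φ y s : ℝ) : ℂ) * g y s) x t
          - 4 * (α : ℂ) * Aop n R φ (fun y s => ((cwt n R α φ y s : ℝ) : ℂ) * g y s) x t := by
  intro x t
  have hG : ContDiff ℝ (⊤ : ℕ∞) (fun y => g y t) := hg.comp (contDiff_id.prodMk contDiff_const)
  have h1 : (fun y => ((cwt n R α φ y t : ℝ) : ℂ) * g y t)
      = fun y => cw α R (φ t • e1 n) y * g y t := rfl
  have h2 : ((cwt n R α φ x t : ℝ) : ℂ) = cw α R (φ t • e1 n) x := rfl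
  have h3 : (fun s => ((cwt n R α φ x s : ℝ) : ℂ) * g x s)
      = fun s => ((Real.exp (α * ‖R⁻¹ • x + φ s • EuclideanSpace.single (0 : Fin n) (1:ℝ)‖ ^ 2) : ℝ) : ℂ) * g x s := rfl
  have hd := (hasDerivAt_cwg α R φ hφ g hg x t).deriv
  have hlap := lapn_cwG hG α R (φ t • e1 n) x
  have hA : (∑ j, (((R⁻¹ • x + φ t • e1 n) j : ℝ) : ℂ)
        * pdj n (fun y => cw α R (φ t • e1 n) y * g y t) j x)
      = ((2 * α * R⁻¹ * ∑ i, ((R⁻¹ • x + φ t • e1 n) i) ^ 2 : ℝ) : ℂ)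
          * (cw α R (φ t • e1 n) x * g x t)
        + cw α R (φ t • e1 n) x * ∑ j, (((R⁻¹ • x + φ t • e1 n) j : ℝ) : ℂ)
            * pdj n (fun y => g y t) j x := by
    simp_rw [pdjn_cwG hG α R (φ t • e1 n)]
    push_cast
    simp only [mul_add, Finset.mul_sum, Finset.sum_add_distrib, Finset.sum_mul]
    congr 1
    · exact Finset.sum_congr rfl fun j _ => by ring
    · exact Finset.sum_congr rfl fun j _ => by ring
  have hn : ‖R⁻¹ • x + φ t • e1 n‖ ^ 2 = ∑ i, ((R⁻¹ • x + φ t • e1 n) i) ^ 2 :=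
    norm_sq_sum _
  simp only [Sop, Aop]
  simp only [h1, h2, h3]
  rw [hd, hA, hlap, hn]
  simp only [cw, e1]
  push_cast
  ring
end
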